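/- arXiv:2308.16196 — 2 statements merged into one kernel-verified Lean document; each statement's English description precedes it below -/
import Mathlib

section
/- Flow (semigroup) property of the negative reflection map (Proposition on the reflection map, part (ii)): Let r0, z ∈ ℝ and let β : ℝ → ℝ be bounded on [r0, r] for every r ≥ r0. Fix r' ≥ r0 and set y = (Γ^{−,z}β)(r'). Then for every r ≥ r', (Γ^{−,z}β)(r) = y + β(r) − β(r') − sup_{v ∈ [r', r]} max((y + β(v) − β(r')) − z, 0); that is, on [r', ∞) the path (Γ^{−,z}β) coincides with the negative reflection map at z, based at r', applied to the shifted path u ↦ y + β(u) − β(r'). -/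
/-- Negative reflection map at level `z`, based at `r0`:
`(Γ^{−,z}β)(r) = β(r) − sup_{u ∈ [r0, r]} max(β(u) − z, 0)`. -/
noncomputable def negRefl (r0 z : ℝ) (β : ℝ → ℝ) (r : ℝ) : ℝ :=
  β r - sSup ((fun u => max (β u - z) 0) '' Set.Icc r0 r)

/-!
Because `t ↦ max (t - z) 0` is monotone and continuous, the running supremum in `negRefl` is
`max (sSup (β '' [r0, r]) - z) 0`. Split `[r0, r]` at `r'`, with suprema `A` and `B` of `β` on the
two pieces, and let `p = max (A - z) 0` be the push-down accumulated by time `r'`, so that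
`y = β r' - p`. The shifted path reflected from `r'` is pushed down by `max (B - z - p) 0`, and
`max (max A B - z) 0 = p + max (B - z - p) 0`.
-/

open Set

theorem Monotone.csSup_image_comp {ι α β : Type*}
    [ConditionallyCompleteLinearOrder α] [TopologicalSpace α] [OrderTopology α]
    [ConditionallyCompleteLinearOrder β] [TopologicalSpace β] [OrderClosedTopology β]
    {f : α → β} (hf : Monotone f) (hcont : Continuous f)
    {g : ι → α} {s : Set ι} (hs : s.Nonempty) (hg : BddAbove (g '' s)) :
    sSup ((fun x => f (g x)) '' s) = f (sSup (g '' s)) := by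
  rw [hf.map_csSup_of_continuousAt hcont.continuousAt (hs.image g) hg, image_image]

theorem csSup_image_Icc_eq_max {α β : Type*} [LinearOrder α] [ConditionallyCompleteLattice β]
    {g : α → β} {a b c : α} (hab : a ≤ b) (hbc : b ≤ c)
    (hg : BddAbove (g '' Icc a c)) :
    sSup (g '' Icc a c) = max (sSup (g '' Icc a b)) (sSup (g '' Icc b c)) := by
  rw [← Icc_union_Icc_eq_Icc hab hbc, image_union] at hg ⊢
  exact csSup_union (bddAbove_union.1 hg).1 ((nonempty_Icc.2 hab).image g)
    (bddAbove_union.1 hg).2 ((nonempty_Icc.2 hbc).image g)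

theorem max_max_sub_zero_eq_add {α : Type*} [AddCommGroup α] [LinearOrder α]
    [IsOrderedAddMonoid α] (a b c : α) :
    max (max a b - c) 0 = max (a - c) 0 + max (b - c - max (a - c) 0) 0 :=
  calc max (max a b - c) 0 = max (b - c) (max (a - c) 0) := by
        rw [← max_sub_sub_right]; ac_rfl
    _ = max (b - c - max (a - c) 0 + max (a - c) 0) (0 + max (a - c) 0) := by
        rw [sub_add_cancel, zero_add]
    _ = max (a - c) 0 + max (b - c - max (a - c) 0) 0 := by rw [max_add_add_right, add_comm]

theorem negRefl_eq (r0 z : ℝ) {β : ℝ → ℝ} {r : ℝ} (hr : r0 ≤ r)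
    (hβ : BddAbove (β '' Icc r0 r)) :
    negRefl r0 z β r = β r - max (sSup (β '' Icc r0 r) - z) 0 := by
  have hmono : Monotone fun t : ℝ => max (t - z) 0 := fun _ _ h =>
    max_le_max (sub_le_sub_right h z) le_rfl
  rw [negRefl, hmono.csSup_image_comp (by fun_prop) (nonempty_Icc.2 hr) hβ]

/-- Flow (semigroup) property of the negative reflection map: for `r0 ≤ r' ≤ r`, with
`y = (Γ^{−,z}β)(r')`,
`(Γ^{−,z}β)(r) = y + β(r) − β(r') − sup_{v ∈ [r', r]} max((y + β(v) − β(r')) − z, 0)`,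
i.e. on `[r', ∞)` the reflected path coincides with the negative reflection map at `z` based
at `r'` applied to the shifted path `u ↦ y + β(u) − β(r')`. -/
theorem negRefl_flow (r0 z : ℝ) (β : ℝ → ℝ)
    (hβ : ∀ r, r0 ≤ r → ∃ M, ∀ u ∈ Set.Icc r0 r, |β u| ≤ M)
    (r' : ℝ) (hr' : r0 ≤ r') (y : ℝ) (hy : y = negRefl r0 z β r') :
    ∀ r, r' ≤ r →
      negRefl r0 z β r = negRefl r' z (fun u => y + β u - β r') r := by
  intro r hr
  obtain ⟨M, hM⟩ := hβ r (hr'.trans hr)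
  have hbdd : BddAbove (β '' Icc r0 r) :=
    ⟨M, by rintro _ ⟨u, hu, rfl⟩; exact (le_abs_self _).trans (hM u hu)⟩
  have hbdd' : BddAbove (β '' Icc r' r) := hbdd.mono (image_mono (Icc_subset_Icc_left hr'))
  have hy' : y = β r' - max (sSup (β '' Icc r0 r') - z) 0 :=
    hy.trans (negRefl_eq r0 z hr' (hbdd.mono (image_mono (Icc_subset_Icc_right hr))))
  have hshift : Monotone fun t => y + t - β r' := fun _ _ h =>
    sub_le_sub_right (add_le_add_right h y) (β r')
  have hshift_bdd : BddAbove ((fun u => y + β u - β r') '' Icc r' r) := by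
    simpa only [image_image] using hshift.map_bddAbove hbdd'
  rw [negRefl_eq r0 z (hr'.trans hr) hbdd, csSup_image_Icc_eq_max hr' hr hbdd,
    negRefl_eq r' z hr hshift_bdd,
    hshift.csSup_image_comp (by fun_prop) (nonempty_Icc.2 hr) hbdd', max_max_sub_zero_eq_add]
  have hstart : y + sSup (β '' Icc r' r) - β r' - z =
      sSup (β '' Icc r' r) - z - max (sSup (β '' Icc r0 r') - z) 0 := by
    rw [hy']; ring
  rw [hstart, hy']
  ring
end

section
/- Decomposition of the running negative-part supremum (key identity in the proof of the flow property of the reflection map): Let r0 ∈ ℝ and let β : ℝ → ℝ be bounded on [r0, r] for every r ≥ r0. Then for all r0 ≤ r' ≤ r, sup_{u ∈ [r0, r]} max(−β(u), 0) = sup_{u ∈ [r0, r']} max(−β(u), 0) + sup_{v ∈ [r', r]} max(−(β(v) + sup_{u ∈ [r0, r']} max(−β(u), 0)), 0). -/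
/-!
Writing `f = [β]_−` and `B = sup_{[r0, r']} f`, the supremum over `[r0, r]` is
`max B (sup_{[r', r]} f) = B + [sup_{[r', r]} f - B]_+`, and `x ↦ [x - B]_+` is monotone and
continuous, so it commutes with the supremum over `[r', r]`. Since `B ≥ 0`, we have
`[β + B]_− = [f - B]_+` pointwise.
-/

open Set

section LinearOrderedAddCommGroup

variable {α : Type*} [AddCommGroup α] [LinearOrder α] [IsOrderedAddMonoid α]

lemma max_eq_add_max_sub_zero (a b : α) : max a b = a + max (b - a) 0 := by
  rcases le_total a b with h | h <;> simp [h]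

lemma max_max_zero_sub_zero {c : α} (hc : 0 ≤ c) (a : α) :
    max (max a 0 - c) 0 = max (a - c) 0 := by
  rcases le_total a 0 with h | h
  · simp [h, hc, (sub_le_self a hc).trans h]
  · simp [h]

end LinearOrderedAddCommGroup

lemma max_csSup_image_sub_zero {f : ℝ → ℝ} {s : Set ℝ} (hs : s.Nonempty)
    (hf : BddAbove (f '' s)) (c : ℝ) :
    max (sSup (f '' s) - c) 0 = sSup ((fun v => max (f v - c) 0) '' s) := by
  have hmono : Monotone fun x : ℝ => max (x - c) 0 := fun _ _ hxy =>
    max_le_max (sub_le_sub_right hxy c) le_rfl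
  rw [hmono.map_csSup_of_continuousAt (by fun_prop) (hs.image f) hf, image_image]

lemma csSup_image_union_eq_add {f : ℝ → ℝ} {s t : Set ℝ} (hs : s.Nonempty) (ht : t.Nonempty)
    (hfs : BddAbove (f '' s)) (hft : BddAbove (f '' t)) :
    sSup (f '' (s ∪ t)) =
      sSup (f '' s) + sSup ((fun v => max (f v - sSup (f '' s)) 0) '' t) := by
  rw [image_union, csSup_union hfs (hs.image f) hft (ht.image f),
    ← max_csSup_image_sub_zero ht hft, max_eq_add_max_sub_zero]

/-- Decomposition of the running negative-part supremum: for `r0 ≤ r' ≤ r` and `β` bounded on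
each interval `[r0, r]`,
`sup_{u ∈ [r0, r]} [β(u)]_− = sup_{u ∈ [r0, r']} [β(u)]_−
  + sup_{v ∈ [r', r]} [β(v) + sup_{u ∈ [r0, r']} [β(u)]_−]_−`,
where `[x]_− = max(−x, 0)`. -/
theorem negPart_sup_decomposition (r0 : ℝ) (β : ℝ → ℝ)
    (hβ : ∀ r, r0 ≤ r → ∃ M, ∀ u ∈ Set.Icc r0 r, |β u| ≤ M)
    (r' r : ℝ) (h1 : r0 ≤ r') (h2 : r' ≤ r) :
    sSup ((fun u => max (-β u) 0) '' Set.Icc r0 r) =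
      sSup ((fun u => max (-β u) 0) '' Set.Icc r0 r') +
        sSup ((fun v => max (-(β v + sSup ((fun u => max (-β u) 0) '' Set.Icc r0 r'))) 0) ''
          Set.Icc r' r) := by
  set f : ℝ → ℝ := fun u => max (-β u) 0
  obtain ⟨M, hM⟩ := hβ r (h1.trans h2)
  have hbdd : BddAbove (f '' Icc r0 r) := ⟨max M 0, by
    rintro _ ⟨u, hu, rfl⟩
    exact max_le_max ((neg_le_abs _).trans (hM u hu)) le_rfl⟩
  rw [← Icc_union_Icc_eq_Icc h1 h2] at hbdd ⊢
  have hB : 0 ≤ sSup (f '' Icc r0 r') :=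
    (le_max_right _ _).trans (le_csSup (hbdd.mono (image_mono subset_union_left))
      (mem_image_of_mem f (left_mem_Icc.2 h1)))
  rw [csSup_image_union_eq_add (nonempty_Icc.2 h1) (nonempty_Icc.2 h2)
    (hbdd.mono (image_mono subset_union_left)) (hbdd.mono (image_mono subset_union_right))]
  simp only [f, neg_add', max_max_zero_sub_zero hB]
end
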